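/- arXiv:2206.00712 — 3 statements merged into one kernel-verified Lean document; each statement's English description precedes it below -/
import Mathlib

section
/- Let H be an n×n real symmetric matrix with ‖H‖₂ ≤ κ_H, and let u, v ∈ ℝⁿ. If ζ > 0, u satisfies uᵀHu ≥ ζ‖u‖² whenever u is in a given subspace, and ‖u‖² ≥ κ‖v‖² for a sufficiently large constant κ (specifically any κ > 0 with ζ - 2κ_H/√κ - κ_H/κ ≥ ζ/2), then the vector d = u + v with u in the subspace and ⟨u,v⟩ = 0 satisfies dᵀHd ≥ (ζ/2)‖u‖². -/
open scoped RealInnerProductSpace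

theorem stmt_0 {n : ℕ}
    (H : EuclideanSpace ℝ (Fin n) →L[ℝ] EuclideanSpace ℝ (Fin n))
    (hsymm : ∀ x y : EuclideanSpace ℝ (Fin n), ⟪H x, y⟫ = ⟪x, H y⟫)
    (κH ζ κ : ℝ) (hH : ‖H‖ ≤ κH) (hζ : 0 < ζ) (hκ : 0 < κ)
    (S : Submodule ℝ (EuclideanSpace ℝ (Fin n)))
    (hcurv : ∀ u ∈ S, ζ * ‖u‖ ^ 2 ≤ ⟪u, H u⟫)
    (hκbig : ζ / 2 ≤ ζ - 2 * κH / Real.sqrt κ - κH / κ)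
    (u v : EuclideanSpace ℝ (Fin n)) (hu : u ∈ S)
    (horth : ⟪u, v⟫ = 0) (hdom : κ * ‖v‖ ^ 2 ≤ ‖u‖ ^ 2) :
    ζ / 2 * ‖u‖ ^ 2 ≤ ⟪u + v, H (u + v)⟫ := by
  have hκH : 0 ≤ κH := le_trans (norm_nonneg H) hH
  have hs : 0 < Real.sqrt κ := Real.sqrt_pos.mpr hκ
  have hs2 : Real.sqrt κ ^ 2 = κ := Real.sq_sqrt hκ.le
  have h1 : |⟪u, H v⟫| ≤ κH * ‖u‖ * ‖v‖ := by
    calc |⟪u, H v⟫| ≤ ‖u‖ * ‖H v‖ := abs_real_inner_le_norm u (H v)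
    _ ≤ ‖u‖ * (κH * ‖v‖) := by
        have := H.le_opNorm v
        have h2 : ‖H v‖ ≤ κH * ‖v‖ := this.trans (by nlinarith [norm_nonneg v])
        nlinarith [norm_nonneg u]
    _ = κH * ‖u‖ * ‖v‖ := by ring
  have h2 : |⟪v, H v⟫| ≤ κH * ‖v‖ ^ 2 := by
    calc |⟪v, H v⟫| ≤ ‖v‖ * ‖H v‖ := abs_real_inner_le_norm v (H v)
    _ ≤ κH * ‖v‖ ^ 2 := by
        have := H.le_opNorm v
        nlinarith [norm_nonneg v, norm_nonneg (H v)]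
  have hexp : ⟪u + v, H (u + v)⟫ = ⟪u, H u⟫ + 2 * ⟪u, H v⟫ + ⟪v, H v⟫ := by
    have hvu : ⟪v, H u⟫ = ⟪u, H v⟫ := by
      rw [← hsymm u v, real_inner_comm]
    simp only [map_add, inner_add_add_self, inner_add_left, inner_add_right]
    ring_nf
    linarith [hvu]
  have hcu := hcurv u hu
  have hvle : Real.sqrt κ * ‖v‖ ≤ ‖u‖ := by
    nlinarith [norm_nonneg u, norm_nonneg v, mul_nonneg hs.le (norm_nonneg v)]
  -- from hκbig: 2*κH/√κ + κH/κ ≤ ζ/2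
  have hkey : 2 * κH / Real.sqrt κ + κH / κ ≤ ζ / 2 := by linarith
  have hb1 : 2 * κH * ‖u‖ * ‖v‖ ≤ (2 * κH / Real.sqrt κ) * ‖u‖ ^ 2 := by
    rw [div_mul_eq_mul_div, le_div_iff₀ hs]
    nlinarith [mul_le_mul_of_nonneg_left hvle (by positivity : (0:ℝ) ≤ 2 * κH * ‖u‖)]
  have hb2 : κH * ‖v‖ ^ 2 ≤ (κH / κ) * ‖u‖ ^ 2 := by
    rw [div_mul_eq_mul_div, le_div_iff₀ hκ]
    nlinarith
  have habs1 := abs_le.mp h1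
  have habs2 := abs_le.mp h2
  rw [hexp]
  nlinarith [sq_nonneg ‖u‖, mul_le_mul_of_nonneg_right hkey (sq_nonneg ‖u‖)]
end

section
/- Let η ∈ (0,1), β ∈ (0,1], σ ∈ [2,4], α_u > 0, and suppose Δ > 0, d ≠ 0, T > 0 (the quantity (τ̄L+Γ)‖d̄‖²) satisfy Δ ≥ κT for some κ > 0. Define α_opt = max{min{Δ/T, 1}, (Δ − 2c)/T} for some c ≥ 0, and α = min{2(1−η)β^{σ/2−1}Δ/T, α_opt, α_u β^{2−σ/2}, 1}. Then min{α_u, 1, κ, 2(1−η)κ}·β ≤ α ≤ α_u β^{2−σ/2}. -/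
theorem stmt_15 (η β σ αu Δ T κ c : ℝ)
    (hη : η ∈ Set.Ioo (0 : ℝ) 1) (hβ : β ∈ Set.Ioc (0 : ℝ) 1)
    (hσ : σ ∈ Set.Icc (2 : ℝ) 4) (hαu : 0 < αu)
    (hΔ : 0 < Δ) (hT : 0 < T) (hκ : 0 < κ) (hc : 0 ≤ c)
    (hΔT : κ * T ≤ Δ)
    (αopt α : ℝ)
    (hαopt : αopt = max (min (Δ / T) 1) ((Δ - 2 * c) / T))
    (hα : α = min (min (2 * (1 - η) * β ^ (σ / 2 - 1) * Δ / T) αopt)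
        (min (αu * β ^ (2 - σ / 2)) 1)) :
    min (min αu 1) (min κ (2 * (1 - η) * κ)) * β ≤ α ∧
      α ≤ αu * β ^ (2 - σ / 2) := by
  obtain ⟨hβ0, hβ1⟩ := hβ
  obtain ⟨hη0, hη1⟩ := hη
  obtain ⟨hσ2, hσ4⟩ := hσ
  have h1η : 0 < 1 - η := by linarith
  -- β ≤ β ^ (σ/2 - 1)
  have hb1 : β ≤ β ^ (σ / 2 - 1) := by
    calc β = β ^ (1 : ℝ) := (Real.rpow_one β).symm
    _ ≤ β ^ (σ / 2 - 1) := Real.rpow_le_rpow_of_exponent_ge hβ0 hβ1 (by linarith)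
  -- β ≤ β ^ (2 - σ/2)
  have hb2 : β ≤ β ^ (2 - σ / 2) := by
    calc β = β ^ (1 : ℝ) := (Real.rpow_one β).symm
    _ ≤ β ^ (2 - σ / 2) := Real.rpow_le_rpow_of_exponent_ge hβ0 hβ1 (by linarith)
  have hκΔT : κ ≤ Δ / T := (le_div_iff₀ hT).mpr hΔT
  set m := min (min αu 1) (min κ (2 * (1 - η) * κ)) with hm
  have hm0 : 0 < m := by
    simp only [hm, lt_min_iff]
    refine ⟨⟨hαu, one_pos⟩, hκ, by positivity⟩
  have hmb : m * β ≤ m := by nlinarith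
  constructor
  · rw [hα]
    refine le_min (le_min ?_ ?_) (le_min ?_ ?_)
    · -- m * β ≤ 2(1-η) β^(σ/2-1) Δ / T
      have h1 : m ≤ 2 * (1 - η) * κ := le_trans (min_le_right _ _) (min_le_right _ _)
      have h2 : 2 * (1 - η) * κ * β ≤ 2 * (1 - η) * κ * β ^ (σ / 2 - 1) := by nlinarith
      have h3 : 2 * (1 - η) * κ * β ^ (σ / 2 - 1) ≤ 2 * (1 - η) * β ^ (σ / 2 - 1) * Δ / T := by
        have hbp : (0:ℝ) ≤ 2 * (1 - η) * β ^ (σ / 2 - 1) := by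
          have := Real.rpow_pos_of_pos hβ0 (σ / 2 - 1)
          positivity
        calc 2 * (1 - η) * κ * β ^ (σ / 2 - 1)
            = 2 * (1 - η) * β ^ (σ / 2 - 1) * κ := by ring
          _ ≤ 2 * (1 - η) * β ^ (σ / 2 - 1) * (Δ / T) := mul_le_mul_of_nonneg_left hκΔT hbp
          _ = 2 * (1 - η) * β ^ (σ / 2 - 1) * Δ / T := by ring
      nlinarith
    · -- m * β ≤ αopt
      have : m ≤ αopt := by
        rw [hαopt]
        refine le_trans ?_ (le_max_left _ _)
        exact le_min (le_trans (min_le_right _ _) (le_trans (min_le_left _ _) hκΔT))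
          (le_trans (min_le_left _ _) (min_le_right _ _))
      linarith
    · -- m * β ≤ αu * β^(2-σ/2)
      have h1 : m ≤ αu := le_trans (min_le_left _ _) (min_le_left _ _)
      nlinarith
    · -- m * β ≤ 1
      have : m ≤ 1 := le_trans (min_le_left _ _) (min_le_right _ _)
      linarith
  · rw [hα]
    exact le_trans (min_le_right _ _) (min_le_left _ _)
end

section
/- Let φ: ℝⁿ × ℝ_{>0} → ℝ, φ(x,τ) = τf(x) + ‖c(x)‖₁, where f is L-smooth (‖∇f(x)−∇f(y)‖ ≤ L‖x−y‖) and each component of c has Γ-Lipschitz gradient so that ‖c(x+αd)‖₁ ≤ ‖c(x)+αJ(x)d‖₁ + (Γ/2)α²‖d‖². Then for α ∈ [0,1], τ > 0: φ(x+αd, τ) − φ(x, τ) ≤ α(τ∇f(x)ᵀd − ‖c(x)‖₁) + (1/2)(τL+Γ)α²‖d‖² + α‖c(x)+J(x)d‖₁. -/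
open scoped RealInnerProductSpace

/-- The ℓ₁-norm of a vector in ℝᵐ. -/
noncomputable def l1norm {m : ℕ} (v : Fin m → ℝ) : ℝ := ∑ i, |v i|

/-!
The smooth part is bounded by the descent lemma, obtained by comparing
`t ↦ f (x + t • s) - f x - t * ⟪∇f x, s⟫` with `L t² ‖s‖² / 2` on `[0, 1]`. The constraint part is
bounded by the linearization error of `c`, followed by convexity of the ℓ₁-norm along the segment
from `c x` to `c x + J x d`.
-/

section Descent

variable {E : Type*} [NormedAddCommGroup E] [InnerProductSpace ℝ E] [CompleteSpace E]
  {f : E → ℝ} {g : E → E}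

theorem HasGradientAt.hasDerivAt_comp_add_smul {x s : E} {t : ℝ} {g' : E}
    (h : HasGradientAt f g' (x + t • s)) :
    HasDerivAt (fun t : ℝ ↦ f (x + t • s)) ⟪g', s⟫ t := by
  have hline : HasDerivAt (fun t : ℝ ↦ x + t • s) s t := by
    simpa using ((hasDerivAt_id t).smul_const s).const_add x
  have hcomp := h.hasFDerivAt.comp_hasDerivAt t hline
  simp only [InnerProductSpace.toDual_apply_apply] at hcomp
  exact hcomp

theorem le_add_inner_add_of_lipschitz_gradient {L : ℝ} (hgrad : ∀ x, HasGradientAt f (g x) x)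
    (hLip : ∀ x y, ‖g x - g y‖ ≤ L * ‖x - y‖) (x s : E) :
    f (x + s) ≤ f x + ⟪g x, s⟫ + L / 2 * ‖s‖ ^ 2 := by
  set φ : ℝ → ℝ := fun t ↦ f (x + t • s) - f x - t * ⟪g x, s⟫
  set B : ℝ → ℝ := fun t ↦ L / 2 * t ^ 2 * ‖s‖ ^ 2
  have hφ (t : ℝ) : HasDerivAt φ ⟪g (x + t • s) - g x, s⟫ t := by
    rw [inner_sub_left]
    exact (((hgrad _).hasDerivAt_comp_add_smul).sub_const _).sub
      (by simpa using (hasDerivAt_id t).mul_const ⟪g x, s⟫)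
  have hB (t : ℝ) : HasDerivAt B (L * t * ‖s‖ ^ 2) t :=
    (((hasDerivAt_pow 2 t).const_mul (L / 2)).mul_const (‖s‖ ^ 2)).congr_deriv (by ring)
  have hbound (t : ℝ) (ht : 0 ≤ t) : ⟪g (x + t • s) - g x, s⟫ ≤ L * t * ‖s‖ ^ 2 :=
    calc ⟪g (x + t • s) - g x, s⟫ ≤ ‖g (x + t • s) - g x‖ * ‖s‖ := real_inner_le_norm _ _
      _ ≤ L * ‖t • s‖ * ‖s‖ := by
          gcongr
          simpa using hLip (x + t • s) x
      _ = L * t * ‖s‖ ^ 2 := by rw [norm_smul, Real.norm_of_nonneg ht]; ring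
  have hφB := image_le_of_deriv_right_le_deriv_boundary
    (fun t _ ↦ (hφ t).continuousAt.continuousWithinAt) (fun t _ ↦ (hφ t).hasDerivWithinAt)
    (by simp [φ, B]) (fun t _ ↦ (hB t).continuousAt.continuousWithinAt)
    (fun t _ ↦ (hB t).hasDerivWithinAt) (fun t ht ↦ hbound t ht.1)
    (Set.right_mem_Icc.2 zero_le_one)
  simp only [φ, B, one_smul, one_mul, one_pow] at hφB
  linarith

end Descent

section L1

variable {m : ℕ}

theorem l1norm_add_le (u v : Fin m → ℝ) : l1norm (u + v) ≤ l1norm u + l1norm v := by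
  simp only [l1norm, Pi.add_apply, ← Finset.sum_add_distrib]
  exact Finset.sum_le_sum fun i _ ↦ abs_add_le _ _

theorem l1norm_smul (a : ℝ) (v : Fin m → ℝ) : l1norm (a • v) = |a| * l1norm v := by
  simp only [l1norm, Pi.smul_apply, smul_eq_mul, abs_mul, Finset.mul_sum]

theorem l1norm_le_add_l1norm_sub (u v : Fin m → ℝ) : l1norm u ≤ l1norm v + l1norm (u - v) := by
  simpa [add_comm] using l1norm_add_le v (u - v)

theorem l1norm_add_smul_le {α : ℝ} (hα : α ∈ Set.Icc (0 : ℝ) 1) (u v : Fin m → ℝ) :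
    l1norm (u + α • v) ≤ (1 - α) * l1norm u + α * l1norm (u + v) :=
  calc l1norm (u + α • v) = l1norm ((1 - α) • u + α • (u + v)) := by
        congr 1; module
    _ ≤ l1norm ((1 - α) • u) + l1norm (α • (u + v)) := l1norm_add_le _ _
    _ = (1 - α) * l1norm u + α * l1norm (u + v) := by
        rw [l1norm_smul, l1norm_smul, abs_of_nonneg hα.1, abs_of_nonneg (sub_nonneg.2 hα.2)]

end L1

theorem stmt_16_general {n m : ℕ}
    (f : EuclideanSpace ℝ (Fin n) → ℝ)
    (g : EuclideanSpace ℝ (Fin n) → EuclideanSpace ℝ (Fin n))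
    (hgrad : ∀ x, HasGradientAt f (g x) x)
    (L Γ : ℝ)
    (hLip : ∀ x y, ‖g x - g y‖ ≤ L * ‖x - y‖)
    (c : EuclideanSpace ℝ (Fin n) → Fin m → ℝ)
    (J : EuclideanSpace ℝ (Fin n) → (EuclideanSpace ℝ (Fin n) →L[ℝ] (Fin m → ℝ)))
    (hJac : ∀ x s, l1norm (c (x + s) - c x - J x s) ≤ Γ / 2 * ‖s‖ ^ 2)
    (x d : EuclideanSpace ℝ (Fin n)) (α τ : ℝ)
    (hα : α ∈ Set.Icc (0 : ℝ) 1) (hτ : 0 < τ) :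
    (τ * f (x + α • d) + l1norm (c (x + α • d))) - (τ * f x + l1norm (c x)) ≤
      α * (τ * ⟪g x, d⟫ - l1norm (c x)) + (1 / 2) * (τ * L + Γ) * α ^ 2 * ‖d‖ ^ 2
        + α * l1norm (c x + J x d) := by
  have hnorm : ‖α • d‖ ^ 2 = α ^ 2 * ‖d‖ ^ 2 := by rw [norm_smul, mul_pow, Real.norm_eq_abs, sq_abs]
  have hf := le_add_inner_add_of_lipschitz_gradient hgrad hLip x (α • d)
  rw [real_inner_smul_right, hnorm] at hf
  have hc : l1norm (c (x + α • d)) ≤ l1norm (c x + α • J x d) + Γ / 2 * α ^ 2 * ‖d‖ ^ 2 := by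
    have hlin := hJac x (α • d)
    rw [map_smul, hnorm, sub_sub] at hlin
    linarith [l1norm_le_add_l1norm_sub (c (x + α • d)) (c x + α • J x d)]
  have hconv := l1norm_add_smul_le hα (c x) (J x d)
  linarith [mul_le_mul_of_nonneg_left hf hτ.le]

theorem stmt_16 {n m : ℕ}
    (f : EuclideanSpace ℝ (Fin n) → ℝ)
    (g : EuclideanSpace ℝ (Fin n) → EuclideanSpace ℝ (Fin n))
    (hgrad : ∀ x, HasGradientAt f (g x) x)
    (L Γ : ℝ) (hL : 0 < L) (hΓ : 0 < Γ)
    (hLip : ∀ x y, ‖g x - g y‖ ≤ L * ‖x - y‖)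
    (c : EuclideanSpace ℝ (Fin n) → Fin m → ℝ)
    (J : EuclideanSpace ℝ (Fin n) → (EuclideanSpace ℝ (Fin n) →L[ℝ] (Fin m → ℝ)))
    (hJac : ∀ x s, l1norm (c (x + s) - c x - J x s) ≤ Γ / 2 * ‖s‖ ^ 2)
    (x d : EuclideanSpace ℝ (Fin n)) (α τ : ℝ)
    (hα : α ∈ Set.Icc (0 : ℝ) 1) (hτ : 0 < τ) :
    (τ * f (x + α • d) + l1norm (c (x + α • d))) - (τ * f x + l1norm (c x)) ≤
      α * (τ * ⟪g x, d⟫ - l1norm (c x)) + (1 / 2) * (τ * L + Γ) * α ^ 2 * ‖d‖ ^ 2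
        + α * l1norm (c x + J x d) :=
  stmt_16_general f g hgrad L Γ hLip c J hJac x d α τ hα hτ
end
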